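/- arXiv:1706.00292 — 4 statements merged into one kernel-verified Lean document; each statement's English description precedes it below -/
import Mathlib

section
/- As ε → 0⁺, the optimal value of the entropic regularized OT problem min_{P ∈ Π(a,b)} ⟨C,P⟩ + ε·H(P | a⊗b) converges to the unregularized optimal transport value min_{P ∈ Π(a,b)} ⟨C,P⟩. -/
/-!
The relative entropy is a continuous function of the plan, and the transport polytope is
compact, so the entropy is bounded on it by some `M`. Perturbing the objective by `ε` times a
function bounded by `M` moves its infimum by at most `|ε| * M`, which tends to `0`.
-/

open Finset Filter

def transportPolytope {n m : ℕ} (a : Fin n → ℝ) (b : Fin m → ℝ) :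
    Set (Matrix (Fin n) (Fin m) ℝ) :=
  {P | (∀ i j, 0 ≤ P i j) ∧ (∀ i, ∑ j, P i j = a i) ∧ (∀ j, ∑ i, P i j = b j)}

noncomputable def relEntropy {n m : ℕ} (P : Matrix (Fin n) (Fin m) ℝ) (a : Fin n → ℝ) (b : Fin m → ℝ) : ℝ :=
  ∑ i, ∑ j, P i j * Real.log (P i j / (a i * b j))

open Topology

section InfPerturbation

variable {X : Type*} {K : Set X} {f g : X → ℝ}

theorem abs_csInf_image_sub_csInf_image_le {δ : ℝ} (hK : K.Nonempty) (hf : BddBelow (f '' K))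
    (h : ∀ x ∈ K, |g x - f x| ≤ δ) : |sInf (g '' K) - sInf (f '' K)| ≤ δ := by
  have hg : BddBelow (g '' K) := by
    refine ⟨sInf (f '' K) - δ, ?_⟩
    rintro _ ⟨x, hx, rfl⟩
    linarith [csInf_le hf ⟨x, hx, rfl⟩, (abs_le.mp (h x hx)).1]
  rw [abs_sub_le_iff]
  constructor
  · rw [sub_le_iff_le_add, ← sub_le_iff_le_add']
    refine le_csInf (hK.image f) ?_
    rintro _ ⟨x, hx, rfl⟩
    linarith [csInf_le hg ⟨x, hx, rfl⟩, (abs_le.mp (h x hx)).2]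
  · rw [sub_le_iff_le_add, ← sub_le_iff_le_add']
    refine le_csInf (hK.image g) ?_
    rintro _ ⟨x, hx, rfl⟩
    linarith [csInf_le hf ⟨x, hx, rfl⟩, (abs_le.mp (h x hx)).1]

theorem IsCompact.tendsto_sInf_image_add_mul [TopologicalSpace X] (hK : IsCompact K)
    (hf : ContinuousOn f K) (hg : ContinuousOn g K) :
    Tendsto (fun ε : ℝ => sInf ((fun x => f x + ε * g x) '' K)) (𝓝 0) (𝓝 (sInf (f '' K))) := by
  rcases K.eq_empty_or_nonempty with rfl | hne
  · simp only [Set.image_empty, Real.sInf_empty, tendsto_const_nhds]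
  obtain ⟨M, hM⟩ := hK.exists_bound_of_continuousOn hg
  have hclose : ∀ ε : ℝ,
      |sInf ((fun x => f x + ε * g x) '' K) - sInf (f '' K)| ≤ |ε| * M := fun ε =>
    abs_csInf_image_sub_csInf_image_le hne (hK.bddBelow_image hf) fun x hx => by
      simpa [abs_mul] using mul_le_mul_of_nonneg_left (hM x hx) (abs_nonneg ε)
  have hbound : Tendsto (fun ε : ℝ => |ε| * M) (𝓝 0) (𝓝 0) := by
    have hcont : Continuous fun ε : ℝ => |ε| * M := by fun_prop
    simpa using hcont.tendsto 0
  rw [tendsto_iff_norm_sub_tendsto_zero]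
  exact squeeze_zero (fun _ => norm_nonneg _) hclose hbound

end InfPerturbation

-- For `c = 0` the map is identically `0`, because `x / 0 = 0` and `Real.log 0 = 0`.
theorem Real.continuous_mul_log_div (c : ℝ) : Continuous fun x : ℝ => x * Real.log (x / c) := by
  rcases eq_or_ne c 0 with rfl | hc
  · simpa using continuous_const
  · have hscale : (fun x : ℝ => x * Real.log (x / c)) = fun x => c * (x / c * Real.log (x / c)) := by
      funext x
      field_simp
    rw [hscale]
    exact continuous_const.mul (Real.continuous_mul_log.comp (continuous_id.div_const c))

section TransportPolytope

variable {n m : ℕ} (a : Fin n → ℝ) (b : Fin m → ℝ)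

theorem continuous_relEntropy : Continuous fun P : Matrix (Fin n) (Fin m) ℝ => relEntropy P a b :=
  continuous_finsetSum _ fun i _ => continuous_finsetSum _ fun j _ =>
    (Real.continuous_mul_log_div _).comp ((continuous_apply j).comp (continuous_apply i))

theorem isClosed_transportPolytope : IsClosed (transportPolytope a b) := by
  simp only [transportPolytope, Set.ofPred_and, Set.ofPred_forall]
  refine (isClosed_iInter fun i => isClosed_iInter fun j => isClosed_le continuous_const ?_).inter
    ((isClosed_iInter fun i => isClosed_eq ?_ continuous_const).inter
    (isClosed_iInter fun j => isClosed_eq ?_ continuous_const)) <;> fun_prop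

theorem transportPolytope_subset_pi_Icc :
    transportPolytope a b ⊆ Set.univ.pi fun _ => Set.univ.pi fun j => Set.Icc 0 (b j) := by
  rintro P ⟨hnonneg, -, hcol⟩ i - j -
  exact ⟨hnonneg i j, hcol j ▸ single_le_sum (fun k _ => hnonneg k j) (mem_univ i)⟩

theorem isCompact_transportPolytope : IsCompact (transportPolytope a b) :=
  (isCompact_univ_pi fun _ => isCompact_univ_pi fun _ => isCompact_Icc).of_isClosed_subset
    (isClosed_transportPolytope a b) (transportPolytope_subset_pi_Icc a b)

end TransportPolytope

theorem entropic_ot_value_tendsto_ot_general {n m : ℕ}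
    (C : Matrix (Fin n) (Fin m) ℝ)
    (a : Fin n → ℝ) (b : Fin m → ℝ) :
    Tendsto
      (fun ε : ℝ => sInf ((fun P => (∑ i, ∑ j, C i j * P i j) + ε * relEntropy P a b) ''
        transportPolytope a b))
      (nhdsWithin 0 (Set.Ioi 0))
      (nhds (sInf ((fun P => ∑ i, ∑ j, C i j * P i j) '' transportPolytope a b))) := by
  have hcost : Continuous fun P : Matrix (Fin n) (Fin m) ℝ => ∑ i, ∑ j, C i j * P i j := by
    fun_prop
  exact ((isCompact_transportPolytope a b).tendsto_sInf_image_add_mul hcost.continuousOn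
    (continuous_relEntropy a b).continuousOn).mono_left nhdsWithin_le_nhds

theorem entropic_ot_value_tendsto_ot {n m : ℕ}
    (C : Matrix (Fin n) (Fin m) ℝ)
    (a : Fin n → ℝ) (b : Fin m → ℝ)
    (ha : ∀ i, 0 < a i) (hb : ∀ j, 0 < b j)
    (hsa : ∑ i, a i = 1) (hsb : ∑ j, b j = 1) :
    Tendsto
      (fun ε : ℝ => sInf ((fun P => (∑ i, ∑ j, C i j * P i j) + ε * relEntropy P a b) ''
        transportPolytope a b))
      (nhdsWithin 0 (Set.Ioi 0))
      (nhds (sInf ((fun P => ∑ i, ∑ j, C i j * P i j) '' transportPolytope a b))) :=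
  entropic_ot_value_tendsto_ot_general C a b
end

section
/- As ε → +∞, the unique minimizer P_ε of ⟨C,P⟩ + ε·H(P | a⊗b) over Π(a,b) converges to the product coupling a⊗b, and consequently ⟨C, P_ε⟩ → ∑_{ij} C_{ij} a_i b_j. -/
/-!
Write `q = a ⊗ b`. Comparing the minimizer `P_ε` with the competitor `q`, which has zero relative
entropy, gives `ε · H(P_ε | q) ≤ ⟨C, q - P_ε⟩ ≤ 2 ∑ |C_ij|`, since couplings have entries in
`[0, 1]`. Since both couplings have mass one, `H(P | q) = ∑ (P log (P / q) - P + q)` is a sum of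
nonnegative terms, each bounded below by the squared Hellinger term `(√P_ij - √q_ij)²`
(this is `log x ≤ x - 1` at `x = √(q_ij / P_ij)`).
Hence `√P_ε → √q` at rate `ε^{-1/2}`, so `P_ε → q`, and the cost converges by continuity.
-/

open Finset Filter

open Topology Real

theorem sq_sqrt_sub_sqrt_le_mul_log_div_sub_add {p q : ℝ} (hp : 0 ≤ p) (hq : 0 < q) :
    (√p - √q) ^ 2 ≤ p * log (p / q) - p + q := by
  rcases hp.eq_or_lt with rfl | hp
  · simp [sq_sqrt hq.le]
  obtain ⟨s, hs, rfl⟩ : ∃ s, 0 < s ∧ s ^ 2 = p := ⟨√p, by positivity, sq_sqrt hp.le⟩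
  obtain ⟨t, ht, rfl⟩ : ∃ t, 0 < t ∧ t ^ 2 = q := ⟨√q, by positivity, sq_sqrt hq.le⟩
  have hlog : log (t / s) ≤ t / s - 1 := log_le_sub_one_of_pos (by positivity)
  have hsplit : log (s ^ 2 / t ^ 2) = -2 * log (t / s) := by
    rw [← div_pow, log_pow, ← inv_div, log_inv]; push_cast; ring
  rw [sqrt_sq hs.le, sqrt_sq ht.le, hsplit]
  have : s ^ 2 * (t / s - 1) = s * t - s ^ 2 := by field_simp
  nlinarith

section TransportPolytope

variable {n m : ℕ} {a : Fin n → ℝ} {b : Fin m → ℝ} {Q : Matrix (Fin n) (Fin m) ℝ}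

theorem outer_mem_transportPolytope (ha : ∀ i, 0 ≤ a i) (hb : ∀ j, 0 ≤ b j)
    (hsa : ∑ i, a i = 1) (hsb : ∑ j, b j = 1) :
    (fun i j => a i * b j) ∈ transportPolytope a b :=
  ⟨fun i j => mul_nonneg (ha i) (hb j), fun i => by rw [← mul_sum, hsb, mul_one],
    fun j => by rw [← sum_mul, hsa, one_mul]⟩

theorem sum_sum_eq_one_of_mem_transportPolytope (hQ : Q ∈ transportPolytope a b)
    (hsa : ∑ i, a i = 1) : ∑ i, ∑ j, Q i j = 1 := by
  simp only [hQ.2.1, hsa]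

theorem le_one_of_mem_transportPolytope (hQ : Q ∈ transportPolytope a b)
    (hsa : ∑ i, a i = 1) (i : Fin n) (j : Fin m) : Q i j ≤ 1 :=
  calc Q i j ≤ ∑ j, Q i j := single_le_sum (fun j _ => hQ.1 i j) (mem_univ j)
    _ ≤ ∑ i, ∑ j, Q i j :=
        single_le_sum (f := fun i => ∑ j, Q i j) (fun i _ => sum_nonneg fun j _ => hQ.1 i j)
          (mem_univ i)
    _ = 1 := sum_sum_eq_one_of_mem_transportPolytope hQ hsa

theorem abs_sum_sum_mul_le_of_mem_transportPolytope (C : Matrix (Fin n) (Fin m) ℝ)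
    (hQ : Q ∈ transportPolytope a b) (hsa : ∑ i, a i = 1) :
    |∑ i, ∑ j, C i j * Q i j| ≤ ∑ i, ∑ j, |C i j| :=
  calc |∑ i, ∑ j, C i j * Q i j| ≤ ∑ i, ∑ j, |C i j * Q i j| :=
        (abs_sum_le_sum_abs _ _).trans (sum_le_sum fun i _ => abs_sum_le_sum_abs _ _)
    _ ≤ ∑ i, ∑ j, |C i j| := sum_le_sum fun i _ => sum_le_sum fun j _ => by
        rw [abs_mul, abs_of_nonneg (hQ.1 i j)]
        exact mul_le_of_le_one_right (abs_nonneg _) (le_one_of_mem_transportPolytope hQ hsa i j)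

theorem relEntropy_outer_self (a : Fin n → ℝ) (b : Fin m → ℝ) :
    relEntropy (fun i j => a i * b j) a b = 0 := by
  refine sum_eq_zero fun i _ => sum_eq_zero fun j _ => ?_
  rcases eq_or_ne (a i * b j) 0 with h | h <;> simp [h]

theorem relEntropy_eq_sum_sum_of_mem_transportPolytope (hQ : Q ∈ transportPolytope a b)
    (hsa : ∑ i, a i = 1) (hsb : ∑ j, b j = 1) :
    relEntropy Q a b = ∑ i, ∑ j, (Q i j * log (Q i j / (a i * b j)) - Q i j + a i * b j) := by
  have houter : ∑ i, ∑ j, a i * b j = 1 := by simp only [← mul_sum, hsb, mul_one, hsa]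
  simp only [sum_add_distrib, sum_sub_distrib, houter,
    sum_sum_eq_one_of_mem_transportPolytope hQ hsa, relEntropy]
  ring

theorem sq_sqrt_sub_sqrt_le_relEntropy (ha : ∀ i, 0 < a i) (hb : ∀ j, 0 < b j)
    (hsa : ∑ i, a i = 1) (hsb : ∑ j, b j = 1) (hQ : Q ∈ transportPolytope a b)
    (i : Fin n) (j : Fin m) : (√(Q i j) - √(a i * b j)) ^ 2 ≤ relEntropy Q a b := by
  have hterm (i : Fin n) (j : Fin m) := sq_sqrt_sub_sqrt_le_mul_log_div_sub_add (hQ.1 i j)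
    (mul_pos (ha i) (hb j))
  have hterm_nonneg (i : Fin n) (j : Fin m) := (sq_nonneg _).trans (hterm i j)
  rw [relEntropy_eq_sum_sum_of_mem_transportPolytope hQ hsa hsb]
  calc (√(Q i j) - √(a i * b j)) ^ 2
      ≤ Q i j * log (Q i j / (a i * b j)) - Q i j + a i * b j := hterm i j
    _ ≤ ∑ j, (Q i j * log (Q i j / (a i * b j)) - Q i j + a i * b j) :=
        single_le_sum (fun j _ => hterm_nonneg i j) (mem_univ j)
    _ ≤ _ := single_le_sum (f := fun i => ∑ j, _)
        (fun i _ => sum_nonneg fun j _ => hterm_nonneg i j) (mem_univ i)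

theorem mul_relEntropy_le_of_forall_le (C : Matrix (Fin n) (Fin m) ℝ)
    (ha : ∀ i, 0 ≤ a i) (hb : ∀ j, 0 ≤ b j) (hsa : ∑ i, a i = 1) (hsb : ∑ j, b j = 1)
    {ε : ℝ} (hQ : Q ∈ transportPolytope a b)
    (hmin : ∀ R ∈ transportPolytope a b,
      (∑ i, ∑ j, C i j * Q i j) + ε * relEntropy Q a b ≤
        (∑ i, ∑ j, C i j * R i j) + ε * relEntropy R a b) :
    ε * relEntropy Q a b ≤ 2 * ∑ i, ∑ j, |C i j| := by
  have houter := outer_mem_transportPolytope ha hb hsa hsb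
  have hcompare := hmin _ houter
  rw [relEntropy_outer_self, mul_zero, add_zero] at hcompare
  have hQcost := abs_le.1 (abs_sum_sum_mul_le_of_mem_transportPolytope C hQ hsa)
  have houter_cost := abs_le.1 (abs_sum_sum_mul_le_of_mem_transportPolytope C houter hsa)
  linarith [hQcost.1, houter_cost.2]

theorem sq_sqrt_sub_sqrt_le_of_forall_le (C : Matrix (Fin n) (Fin m) ℝ)
    (ha : ∀ i, 0 < a i) (hb : ∀ j, 0 < b j) (hsa : ∑ i, a i = 1) (hsb : ∑ j, b j = 1)
    {ε : ℝ} (hε : 0 < ε) (hQ : Q ∈ transportPolytope a b)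
    (hmin : ∀ R ∈ transportPolytope a b,
      (∑ i, ∑ j, C i j * Q i j) + ε * relEntropy Q a b ≤
        (∑ i, ∑ j, C i j * R i j) + ε * relEntropy R a b)
    (i : Fin n) (j : Fin m) :
    (√(Q i j) - √(a i * b j)) ^ 2 ≤ 2 * (∑ i, ∑ j, |C i j|) / ε := by
  rw [le_div_iff₀ hε, mul_comm]
  calc ε * (√(Q i j) - √(a i * b j)) ^ 2 ≤ ε * relEntropy Q a b :=
        mul_le_mul_of_nonneg_left (sq_sqrt_sub_sqrt_le_relEntropy ha hb hsa hsb hQ i j) hε.le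
    _ ≤ 2 * ∑ i, ∑ j, |C i j| :=
        mul_relEntropy_le_of_forall_le C (fun i => (ha i).le) (fun j => (hb j).le) hsa hsb hQ hmin

end TransportPolytope

theorem tendsto_of_sq_sub_le {α : Type*} {l : Filter α} {f g : α → ℝ} {c : ℝ}
    (hfg : ∀ᶠ x in l, (f x - c) ^ 2 ≤ g x) (hg : Tendsto g l (𝓝 0)) :
    Tendsto f l (𝓝 c) := by
  have hsq : Tendsto (fun x => (f x - c) ^ 2) l (𝓝 0) :=
    squeeze_zero' (.of_forall fun x => sq_nonneg _) hfg hg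
  have habs : Tendsto (fun x => |f x - c|) l (𝓝 0) := by
    simpa [Function.comp_def, sqrt_sq_eq_abs] using (continuous_sqrt.tendsto 0).comp hsq
  exact tendsto_iff_dist_tendsto_zero.2 (by simpa only [dist_eq] using habs)

theorem entropic_ot_minimizer_tendsto_product {n m : ℕ}
    (C : Matrix (Fin n) (Fin m) ℝ)
    (a : Fin n → ℝ) (b : Fin m → ℝ)
    (ha : ∀ i, 0 < a i) (hb : ∀ j, 0 < b j)
    (hsa : ∑ i, a i = 1) (hsb : ∑ j, b j = 1)
    (P : ℝ → Matrix (Fin n) (Fin m) ℝ)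
    (hP : ∀ ε > 0, P ε ∈ transportPolytope a b ∧
      ∀ Q ∈ transportPolytope a b,
        (∑ i, ∑ j, C i j * P ε i j) + ε * relEntropy (P ε) a b ≤
          (∑ i, ∑ j, C i j * Q i j) + ε * relEntropy Q a b) :
    Tendsto P atTop (nhds (fun i j => a i * b j)) ∧
    Tendsto (fun ε => ∑ i, ∑ j, C i j * P ε i j) atTop
      (nhds (∑ i, ∑ j, C i j * (a i * b j))) := by
  have hentry (i : Fin n) (j : Fin m) :
      Tendsto (fun ε => P ε i j) atTop (𝓝 (a i * b j)) := by
    have hsqrt : Tendsto (fun ε => √(P ε i j)) atTop (𝓝 √(a i * b j)) := by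
      refine tendsto_of_sq_sub_le (g := fun ε => 2 * (∑ i, ∑ j, |C i j|) / ε) ?_
        (tendsto_const_nhds.div_atTop tendsto_id)
      filter_upwards [eventually_gt_atTop 0] with ε hε
      exact sq_sqrt_sub_sqrt_le_of_forall_le C ha hb hsa hsb hε (hP ε hε).1 (hP ε hε).2 i j
    have hsq := hsqrt.pow 2
    rw [sq_sqrt (mul_pos (ha i) (hb j)).le] at hsq
    refine hsq.congr' ?_
    filter_upwards [eventually_gt_atTop 0] with ε hε
    exact sq_sqrt ((hP ε hε).1.1 i j)
  exact ⟨tendsto_pi_nhds.2 fun i => tendsto_pi_nhds.2 (hentry i),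
    tendsto_finsetSum _ fun i _ => tendsto_finsetSum _ fun j _ => (hentry i j).const_mul _⟩
end

section
/- Define the discrete Sinkhorn loss W̄_ε(a,b) = 2W_ε(a,b) − W_ε(a,a) − W_ε(b,b), where W_ε(a,b) = ⟨C^{ab}, P_ε^{ab}⟩ and P_ε^{ab} is the entropic-OT optimal coupling. Then as ε → +∞, W̄_ε(a,b) converges to the MMD energy 2∑_{ij} c(x_i,y_j)a_i b_j − ∑_{ii'} c(x_i,x_{i'})a_i a_{i'} − ∑_{jj'} c(y_j,y_{j'})b_j b_{j'}, i.e. the squared MMD with kernel k = −c. -/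
open Finset Filter

/-- `P` is the entropic-OT optimal coupling at regularization `ε` for cost `C`
and marginals `a`, `b`. -/
def IsEntropicOptimal {n m : ℕ} (C : Matrix (Fin n) (Fin m) ℝ) (ε : ℝ)
    (a : Fin n → ℝ) (b : Fin m → ℝ) (P : Matrix (Fin n) (Fin m) ℝ) : Prop :=
  P ∈ transportPolytope a b ∧
    ∀ Q ∈ transportPolytope a b,
      (∑ i, ∑ j, C i j * P i j) + ε * relEntropy P a b ≤
        (∑ i, ∑ j, C i j * Q i j) + ε * relEntropy Q a b

/-!
Testing the optimality of `P_ε` against the independent coupling `a ⊗ b`, whose relative entropy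
vanishes, gives `ε KL(P_ε) ≤ δ_ε := ⟨C, a ⊗ b⟩ - ⟨C, P_ε⟩`, so `δ_ε ≥ 0`. The Hellinger bound
`(√p - √q)² ≤ p log (p / q) - p + q` yields `‖P_ε - a ⊗ b‖² ≤ 4 KL(P_ε)` (all entries lie in
`[0, 1]`), and Cauchy–Schwarz then gives `δ_ε² ≤ 4 ‖C‖² KL(P_ε) ≤ 4 ‖C‖² δ_ε / ε`. Hence
`0 ≤ δ_ε ≤ 4 ‖C‖² / ε`: each of the three entropic costs tends to its value at the independent
coupling.
-/

lemma sq_sqrt_sub_sqrt_le {u v : ℝ} (hu : 0 ≤ u) (hv : 0 < v) :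
    (√u - √v) ^ 2 ≤ u * Real.log (u / v) - u + v := by
  rcases hu.eq_or_lt with rfl | hu
  · simp [Real.sq_sqrt hv.le]
  obtain ⟨s, hs, rfl⟩ : ∃ s, 0 < s ∧ u = s ^ 2 := ⟨√u, by positivity, (Real.sq_sqrt hu.le).symm⟩
  obtain ⟨t, ht, rfl⟩ : ∃ t, 0 < t ∧ v = t ^ 2 := ⟨√v, by positivity, (Real.sq_sqrt hv.le).symm⟩
  have hlog : Real.log (s ^ 2 / t ^ 2) = -2 * Real.log (t / s) := by
    rw [← div_pow, Real.log_pow, ← inv_div, Real.log_inv]; push_cast; ring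
  have hlog_le : s ^ 2 * (1 - t / s) ≤ s ^ 2 * -Real.log (t / s) :=
    mul_le_mul_of_nonneg_left (by linarith [Real.log_le_sub_one_of_pos (div_pos ht hs)])
      (by positivity)
  have hst : s ^ 2 * (t / s) = s * t := by field_simp
  rw [Real.sqrt_sq hs.le, Real.sqrt_sq ht.le, hlog]
  nlinarith

lemma sq_sub_le_four_mul_sq_sqrt_sub_sqrt {u v : ℝ} (hu₀ : 0 ≤ u) (hu₁ : u ≤ 1)
    (hv₀ : 0 ≤ v) (hv₁ : v ≤ 1) : (u - v) ^ 2 ≤ 4 * (√u - √v) ^ 2 := by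
  have hfactor : u - v = (√u - √v) * (√u + √v) := by
    rw [mul_comm, ← sq_sub_sq, Real.sq_sqrt hu₀, Real.sq_sqrt hv₀]
  have hsum : (√u + √v) ^ 2 ≤ 4 := by
    have := Real.sqrt_le_one.2 hu₁
    have := Real.sqrt_le_one.2 hv₁
    nlinarith [Real.sqrt_nonneg u, Real.sqrt_nonneg v]
  rw [hfactor, mul_pow, mul_comm 4]
  exact mul_le_mul_of_nonneg_left hsum (sq_nonneg _)

section TransportPolytope

variable {n m : ℕ} {a : Fin n → ℝ} {b : Fin m → ℝ} {P : Matrix (Fin n) (Fin m) ℝ}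

lemma vecMulVec_mem_transportPolytope (ha : ∀ i, 0 ≤ a i) (hb : ∀ j, 0 ≤ b j)
    (hsa : ∑ i, a i = 1) (hsb : ∑ j, b j = 1) :
    Matrix.vecMulVec a b ∈ transportPolytope a b := by
  refine ⟨fun i j => mul_nonneg (ha i) (hb j), fun i => ?_, fun j => ?_⟩
  · simp [Matrix.vecMulVec_apply, ← mul_sum, hsb]
  · simp [Matrix.vecMulVec_apply, ← sum_mul, hsa]

lemma relEntropy_vecMulVec (a : Fin n → ℝ) (b : Fin m → ℝ) :
    relEntropy (Matrix.vecMulVec a b) a b = 0 := by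
  refine sum_eq_zero fun i _ => sum_eq_zero fun j _ => ?_
  rw [Matrix.vecMulVec_apply]
  rcases eq_or_ne (a i * b j) 0 with h | h
  · rw [h, zero_mul]
  · rw [div_self h, Real.log_one, mul_zero]

lemma apply_le_of_mem_transportPolytope (hP : P ∈ transportPolytope a b) (i j) :
    P i j ≤ a i :=
  hP.2.1 i ▸ single_le_sum (fun j _ => hP.1 i j) (mem_univ j)

lemma sum_sum_sq_sqrt_sub_le_relEntropy (hP : P ∈ transportPolytope a b)
    (ha : ∀ i, 0 < a i) (hb : ∀ j, 0 < b j) (hsb : ∑ j, b j = 1) :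
    ∑ i, ∑ j, (√(P i j) - √(a i * b j)) ^ 2 ≤ relEntropy P a b := by
  have hmass : ∑ i, ∑ j, P i j = ∑ i, ∑ j, a i * b j := by
    simp only [hP.2.1, ← mul_sum, hsb, mul_one]
  calc ∑ i, ∑ j, (√(P i j) - √(a i * b j)) ^ 2
      ≤ ∑ i, ∑ j, (P i j * Real.log (P i j / (a i * b j)) - P i j + a i * b j) :=
        sum_le_sum fun i _ => sum_le_sum fun j _ =>
          sq_sqrt_sub_sqrt_le (hP.1 i j) (mul_pos (ha i) (hb j))
    _ = relEntropy P a b := by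
        simp only [relEntropy, sum_add_distrib, sum_sub_distrib, hmass, sub_add_cancel]

lemma relEntropy_nonneg (hP : P ∈ transportPolytope a b)
    (ha : ∀ i, 0 < a i) (hb : ∀ j, 0 < b j) (hsb : ∑ j, b j = 1) :
    0 ≤ relEntropy P a b :=
  (sum_nonneg fun _ _ => sum_nonneg fun _ _ => sq_nonneg _).trans
    (sum_sum_sq_sqrt_sub_le_relEntropy hP ha hb hsb)

lemma sum_sum_sq_sub_le_four_mul_relEntropy (hP : P ∈ transportPolytope a b)
    (ha : ∀ i, 0 < a i) (hb : ∀ j, 0 < b j) (hsa : ∑ i, a i = 1) (hsb : ∑ j, b j = 1) :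
    ∑ i, ∑ j, (P i j - a i * b j) ^ 2 ≤ 4 * relEntropy P a b := by
  have ha₁ (i) : a i ≤ 1 := hsa ▸ single_le_sum (fun i _ => (ha i).le) (mem_univ i)
  have hb₁ (j) : b j ≤ 1 := hsb ▸ single_le_sum (fun j _ => (hb j).le) (mem_univ j)
  calc ∑ i, ∑ j, (P i j - a i * b j) ^ 2
      ≤ ∑ i, ∑ j, 4 * (√(P i j) - √(a i * b j)) ^ 2 :=
        sum_le_sum fun i _ => sum_le_sum fun j _ =>
          sq_sub_le_four_mul_sq_sqrt_sub_sqrt (hP.1 i j)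
            ((apply_le_of_mem_transportPolytope hP i j).trans (ha₁ i))
            (mul_pos (ha i) (hb j)).le (mul_le_one₀ (ha₁ i) (hb j).le (hb₁ j))
    _ ≤ 4 * relEntropy P a b := by
        simp only [← mul_sum]
        exact mul_le_mul_of_nonneg_left (sum_sum_sq_sqrt_sub_le_relEntropy hP ha hb hsb)
          (by norm_num)

end TransportPolytope

lemma sq_sum_sum_mul_le {n m : ℕ} (C D : Matrix (Fin n) (Fin m) ℝ) :
    (∑ i, ∑ j, C i j * D i j) ^ 2 ≤ (∑ i, ∑ j, C i j ^ 2) * ∑ i, ∑ j, D i j ^ 2 := by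
  simpa only [Fintype.sum_prod_type] using
    sum_mul_sq_le_sq_mul_sq univ (fun p : Fin n × Fin m => C p.1 p.2) fun p => D p.1 p.2

namespace IsEntropicOptimal

variable {n m : ℕ} {C : Matrix (Fin n) (Fin m) ℝ} {ε : ℝ} {a : Fin n → ℝ} {b : Fin m → ℝ}
  {P : Matrix (Fin n) (Fin m) ℝ}

lemma cost_add_mul_relEntropy_le (hP : IsEntropicOptimal C ε a b P)
    (ha : ∀ i, 0 ≤ a i) (hb : ∀ j, 0 ≤ b j) (hsa : ∑ i, a i = 1) (hsb : ∑ j, b j = 1) :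
    (∑ i, ∑ j, C i j * P i j) + ε * relEntropy P a b ≤ ∑ i, ∑ j, C i j * (a i * b j) := by
  simpa only [relEntropy_vecMulVec, mul_zero, add_zero, Matrix.vecMulVec_apply] using
    hP.2 _ (vecMulVec_mem_transportPolytope ha hb hsa hsb)

lemma cost_gap_le (hP : IsEntropicOptimal C ε a b P) (hε : 0 < ε)
    (ha : ∀ i, 0 < a i) (hb : ∀ j, 0 < b j) (hsa : ∑ i, a i = 1) (hsb : ∑ j, b j = 1) :
    0 ≤ (∑ i, ∑ j, C i j * (a i * b j)) - ∑ i, ∑ j, C i j * P i j ∧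
      (∑ i, ∑ j, C i j * (a i * b j)) - ∑ i, ∑ j, C i j * P i j ≤
        4 * (∑ i, ∑ j, C i j ^ 2) / ε := by
  set δ := (∑ i, ∑ j, C i j * (a i * b j)) - ∑ i, ∑ j, C i j * P i j
  set S := ∑ i, ∑ j, C i j ^ 2
  have hopt : ε * relEntropy P a b ≤ δ := by
    linarith [hP.cost_add_mul_relEntropy_le (fun i => (ha i).le) (fun j => (hb j).le) hsa hsb]
  have hKL : 0 ≤ relEntropy P a b := relEntropy_nonneg hP.1 ha hb hsb
  have hδ : 0 ≤ δ := (mul_nonneg hε.le hKL).trans hopt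
  have hS : 0 ≤ S := sum_nonneg fun _ _ => sum_nonneg fun _ _ => sq_nonneg _
  have hCS : δ ^ 2 ≤ S * (4 * relEntropy P a b) := by
    have : δ = -∑ i, ∑ j, C i j * (P i j - a i * b j) := by
      simp only [δ, mul_sub, sum_sub_distrib]; ring
    rw [this, neg_sq]
    exact (sq_sum_sum_mul_le C _).trans (mul_le_mul_of_nonneg_left
      (sum_sum_sq_sub_le_four_mul_relEntropy hP.1 ha hb hsa hsb) hS)
  refine ⟨hδ, (le_div_iff₀ hε).2 ?_⟩
  rcases hδ.eq_or_lt with h | h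
  · rw [← h, zero_mul]; positivity
  · refine le_of_mul_le_mul_left ?_ h
    calc δ * (δ * ε) = δ ^ 2 * ε := by ring
      _ ≤ S * (4 * relEntropy P a b) * ε := by gcongr
      _ = 4 * S * (ε * relEntropy P a b) := by ring
      _ ≤ 4 * S * δ := by gcongr
      _ = δ * (4 * S) := by ring

end IsEntropicOptimal

lemma tendsto_cost_of_isEntropicOptimal {n m : ℕ} (C : Matrix (Fin n) (Fin m) ℝ)
    {a : Fin n → ℝ} {b : Fin m → ℝ} (ha : ∀ i, 0 < a i) (hb : ∀ j, 0 < b j)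
    (hsa : ∑ i, a i = 1) (hsb : ∑ j, b j = 1) {P : ℝ → Matrix (Fin n) (Fin m) ℝ}
    (hP : ∀ ε > 0, IsEntropicOptimal C ε a b (P ε)) :
    Tendsto (fun ε => ∑ i, ∑ j, C i j * P ε i j) atTop
      (nhds (∑ i, ∑ j, C i j * (a i * b j))) := by
  set L := ∑ i, ∑ j, C i j * (a i * b j)
  set K := 4 * ∑ i, ∑ j, C i j ^ 2
  have hlower : Tendsto (fun ε : ℝ => L - K / ε) atTop (nhds L) := by
    simpa using (tendsto_const_nhds (x := L)).sub
      ((tendsto_const_nhds (x := K)).div_atTop tendsto_id)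
  refine tendsto_of_tendsto_of_tendsto_of_le_of_le' hlower tendsto_const_nhds ?_ ?_ <;>
    filter_upwards [eventually_gt_atTop 0] with ε hε
  · linarith [((hP ε hε).cost_gap_le hε ha hb hsa hsb).2]
  · linarith [((hP ε hε).cost_gap_le hε ha hb hsa hsb).1]

theorem sinkhorn_loss_tendsto_mmd {X : Type*} {n m : ℕ}
    (c : X → X → ℝ) (x : Fin n → X) (y : Fin m → X)
    (a : Fin n → ℝ) (b : Fin m → ℝ)
    (ha : ∀ i, 0 < a i) (hb : ∀ j, 0 < b j)
    (hsa : ∑ i, a i = 1) (hsb : ∑ j, b j = 1)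
    (Pab : ℝ → Matrix (Fin n) (Fin m) ℝ)
    (Paa : ℝ → Matrix (Fin n) (Fin n) ℝ)
    (Pbb : ℝ → Matrix (Fin m) (Fin m) ℝ)
    (hPab : ∀ ε > 0, IsEntropicOptimal (fun i j => c (x i) (y j)) ε a b (Pab ε))
    (hPaa : ∀ ε > 0, IsEntropicOptimal (fun i i' => c (x i) (x i')) ε a a (Paa ε))
    (hPbb : ∀ ε > 0, IsEntropicOptimal (fun j j' => c (y j) (y j')) ε b b (Pbb ε)) :
    Tendsto
      (fun ε =>
        2 * (∑ i, ∑ j, c (x i) (y j) * Pab ε i j)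
          - (∑ i, ∑ i', c (x i) (x i') * Paa ε i i')
          - (∑ j, ∑ j', c (y j) (y j') * Pbb ε j j'))
      atTop
      (nhds
        (2 * (∑ i, ∑ j, c (x i) (y j) * (a i * b j))
          - (∑ i, ∑ i', c (x i) (x i') * (a i * a i'))
          - (∑ j, ∑ j', c (y j) (y j') * (b j * b j')))) :=
  (((tendsto_cost_of_isEntropicOptimal _ ha hb hsa hsb hPab).const_mul 2).sub
    (tendsto_cost_of_isEntropicOptimal _ ha ha hsa hsa hPaa)).sub
    (tendsto_cost_of_isEntropicOptimal _ hb hb hsb hsb hPbb)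
end

section
/- Minimizing the squared 2-Wasserstein distance W_2²(μ_θ, ν) over empirical measures μ_θ supported on K points with free weights, against the empirical measure ν = (1/N)∑_j δ_{y_j} on ℝ^d, is equivalent to the K-means problem: the optimal value equals min over centers c_1,…,c_K ∈ ℝ^d of (1/N)∑_j min_k ‖y_j − c_k‖². -/
/-!
A transport plan from `ν` to a measure on `x₁, …, x_K` sends each `y_j` (mass `1/N`) to the points
`x_k`, so its cost is at least `1/N · min_k ‖y_j - x_k‖²` per `y_j`. Conversely, sending each `y_j`
entirely to its nearest centre is an admissible plan (the weights being its row sums) of exactly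
the K-means cost.
-/

open Finset

section NearestPointPlan

variable {ι J : Type*} [Fintype ι] [Fintype J]

theorem sum_mul_iInf_le_sum_sum_of_sum_eq (f : ι → J → ℝ) {a : J → ℝ} {P : ι → J → ℝ}
    (hP : ∀ i j, 0 ≤ P i j) (hPa : ∀ j, ∑ i, P i j = a j) :
    ∑ j, a j * ⨅ i, f i j ≤ ∑ i, ∑ j, P i j * f i j := by
  rw [sum_comm]
  refine sum_le_sum fun j _ => ?_
  rw [← hPa j, sum_mul]
  exact sum_le_sum fun i _ =>
    mul_le_mul_of_nonneg_left (ciInf_le (Finite.bddBelow_range _) i) (hP i j)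

theorem exists_sum_eq_sum_mul_iInf [Nonempty ι] (f : ι → J → ℝ) {a : J → ℝ}
    (ha : ∀ j, 0 ≤ a j) :
    ∃ P : ι → J → ℝ, (∀ i j, 0 ≤ P i j) ∧ (∀ j, ∑ i, P i j = a j) ∧
      ∑ i, ∑ j, P i j * f i j = ∑ j, a j * ⨅ i, f i j := by
  classical
  choose nearest hnearest using fun j => exists_eq_ciInf_of_finite (f := fun i => f i j)
  refine ⟨fun i j => if i = nearest j then a j else 0, fun i j => ite_nonneg (ha j) le_rfl,
    fun j => by simp, ?_⟩
  rw [sum_comm]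
  refine sum_congr rfl fun j _ => ?_
  simp [hnearest]

end NearestPointPlan

theorem wasserstein_min_over_k_points_eq_kmeans {d K N : ℕ} [Nonempty (Fin K)]
    (hN : 0 < N) (y : Fin N → EuclideanSpace ℝ (Fin d)) :
    sInf {v : ℝ | ∃ (x : Fin K → EuclideanSpace ℝ (Fin d)) (w : Fin K → ℝ)
        (P : Matrix (Fin K) (Fin N) ℝ),
      (∀ k, 0 ≤ w k) ∧ (∑ k, w k = 1) ∧
      (∀ k j, 0 ≤ P k j) ∧ (∀ k, ∑ j, P k j = w k) ∧
      (∀ j, ∑ k, P k j = 1 / (N : ℝ)) ∧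
      v = ∑ k, ∑ j, P k j * ‖x k - y j‖ ^ 2} =
    sInf {v : ℝ | ∃ c : Fin K → EuclideanSpace ℝ (Fin d),
      v = (1 / (N : ℝ)) * ∑ j, ⨅ k, ‖y j - c k‖ ^ 2} := by
  apply csInf_eq_csInf_of_forall_exists_le
  · rintro _ ⟨x, w, P, -, -, hP, -, hPN, rfl⟩
    refine ⟨_, ⟨x, rfl⟩, ?_⟩
    calc (1 / (N : ℝ)) * ∑ j, ⨅ k, ‖y j - x k‖ ^ 2
        = ∑ j, 1 / (N : ℝ) * ⨅ k, ‖x k - y j‖ ^ 2 := by simp_rw [mul_sum, norm_sub_rev (y _)]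
      _ ≤ _ := sum_mul_iInf_le_sum_sum_of_sum_eq _ hP hPN
  · rintro _ ⟨c, rfl⟩
    obtain ⟨P, hP, hPN, hcost⟩ := exists_sum_eq_sum_mul_iInf (fun k j => ‖c k - y j‖ ^ 2)
      (a := fun _ => 1 / (N : ℝ)) fun _ => by positivity
    refine ⟨_, ⟨c, fun k => ∑ j, P k j, P, fun k => sum_nonneg fun j _ => hP k j, ?_, hP,
      fun k => rfl, hPN, rfl⟩, ?_⟩
    · rw [sum_comm]
      simp [hPN, hN.ne']
    · simp_rw [hcost, mul_sum, norm_sub_rev (y _), le_refl]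
end
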